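/- Let k ≥ 1 and let S, S' ⊆ [0,k] be size-n subsets that are close, i.e. admit a bijection g : S → S' with g(i) ∈ {i−1, i, i+1} for all i ∈ S. Then there exists a unique collection of pairwise disjoint subintervals of [0,k], consisting of intervals I_1, …, I_r and J_1, …, J_s each having at least two elements, such that: (a) on the complement of the union of all these intervals, S and S' coincide, i.e. ([0,k] ∖ (⋃_a I_a ∪ ⋃_b J_b)) ∩ S = ([0,k] ∖ (⋃_a I_a ∪ ⋃_b J_b)) ∩ S'; (b) for each a, if I_a = [i,j] then I_a ∩ S = [i, j−1] and I_a ∩ S' = [i+1, j]; (c) for each b, if J_b = [i,j] then J_b ∩ S' = [i, j−1] and J_b ∩ S = [i+1, j]. Uniqueness means the pair consisting of the set of intervals {I_a} and the set of intervals {J_b} is uniquely determined by S and S'. -/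

import Mathlib

/-!
Write `d x = #(S ∩ (-∞, x]) - #(S' ∩ (-∞, x])`. The near-identity bijection gives `-1 ≤ d ≤ 1`,
and `d x = 1` forces `x ∈ S`. The intervals `I_a = [i, j]` are those for which `[i, j)` is a
maximal run of `d = 1`, the `J_b` those for maximal runs of `d = -1`: along such a run the
increments `d x - d (x - 1) = [x ∈ S] - [x ∈ S']` force exactly the required pattern, and off the
runs they vanish. Conversely, for any admissible family, `d` equals the indicator of the union of
the `[i, j)` over the `I_a` minus that over the `J_b`, since both vanish left of `0` and have the
same increments; so the `I_a` and the `J_b` are forced to be the maximal runs.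
-/

/-- Two finite sets of integers are *close* if there is a bijection `g : S → S'`
with `g i ∈ {i-1, i, i+1}` for every `i ∈ S`. -/
def IsClose (S S' : Finset ℤ) : Prop :=
  ∃ g : ℤ → ℤ, Set.BijOn g ↑S ↑S' ∧ ∀ i ∈ S, g i = i - 1 ∨ g i = i ∨ g i = i + 1

open Finset

structure IsMaxRun (P : ℤ → Prop) (p : ℤ × ℤ) : Prop where
  lt : p.1 < p.2
  holds : ∀ x ∈ Ico p.1 p.2, P x
  not_left : ¬P (p.1 - 1)
  not_right : ¬P p.2

namespace IsMaxRun

variable {P Q : ℤ → Prop} {p q : ℤ × ℤ}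

theorem eq_of_mem_Ico (hp : IsMaxRun P p) (hq : IsMaxRun P q) {x : ℤ}
    (hxp : x ∈ Ico p.1 p.2) (hxq : x ∈ Ico q.1 q.2) : p = q := by
  rw [mem_Ico] at hxp hxq
  have h₁ : p.1 = q.1 := by
    by_contra hne
    rcases lt_or_gt_of_ne hne with h | h
    · exact hq.not_left (hp.holds _ (mem_Ico.2 (by omega)))
    · exact hp.not_left (hq.holds _ (mem_Ico.2 (by omega)))
  have h₂ : p.2 = q.2 := by
    by_contra hne
    rcases lt_or_gt_of_ne hne with h | h
    · exact hp.not_right (hq.holds _ (mem_Ico.2 (by omega)))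
    · exact hq.not_right (hp.holds _ (mem_Ico.2 (by omega)))
  exact Prod.ext h₁ h₂

theorem disjoint_Icc_of_ne (hp : IsMaxRun P p) (hq : IsMaxRun P q) (hne : p ≠ q) :
    Disjoint (Icc p.1 p.2) (Icc q.1 q.2) := by
  refine disjoint_left.2 fun x hxp hxq => hne ?_
  have := hp.lt
  have := hq.lt
  rw [mem_Icc] at hxp hxq
  rcases hxp.2.lt_or_eq with hx | hx <;> rcases hxq.2.lt_or_eq with hx' | hx'
  · exact hp.eq_of_mem_Ico hq (mem_Ico.2 ⟨hxp.1, hx⟩) (mem_Ico.2 ⟨hxq.1, hx'⟩)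
  · exact absurd (hx' ▸ hp.holds x (mem_Ico.2 ⟨hxp.1, hx⟩)) hq.not_right
  · exact absurd (hx ▸ hq.holds x (mem_Ico.2 ⟨hxq.1, hx'⟩)) hp.not_right
  · exact hp.eq_of_mem_Ico hq (x := x - 1) (mem_Ico.2 (by omega)) (mem_Ico.2 (by omega))

theorem disjoint_Icc (hp : IsMaxRun P p) (hq : IsMaxRun Q q)
    (hPQ : ∀ x y, P x → Q y → x + 1 < y ∨ y + 1 < x) :
    Disjoint (Icc p.1 p.2) (Icc q.1 q.2) := by
  refine disjoint_left.2 fun x hxp hxq => ?_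
  have := hp.lt
  have := hq.lt
  rw [mem_Icc] at hxp hxq
  obtain ⟨y, hy, hPy⟩ : ∃ y, x - 1 ≤ y ∧ y ≤ x ∧ P y := by
    rcases hxp.2.lt_or_eq with hx | hx
    · exact ⟨x, by omega, le_rfl, hp.holds x (mem_Ico.2 ⟨hxp.1, hx⟩)⟩
    · exact ⟨x - 1, le_rfl, by omega, hp.holds _ (mem_Ico.2 (by omega))⟩
  obtain ⟨z, hz, hQz⟩ : ∃ z, x - 1 ≤ z ∧ z ≤ x ∧ Q z := by
    rcases hxq.2.lt_or_eq with hx | hx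
    · exact ⟨x, by omega, le_rfl, hq.holds x (mem_Ico.2 ⟨hxq.1, hx⟩)⟩
    · exact ⟨x - 1, le_rfl, by omega, hq.holds _ (mem_Ico.2 (by omega))⟩
  have := hPQ y z hPy.2 hQz.2
  omega

theorem bounds {a b : ℤ} (hP : ∀ x, P x → a ≤ x ∧ x < b) (hp : IsMaxRun P p) :
    a ≤ p.1 ∧ p.2 ≤ b := by
  have h₁ := hP _ (hp.holds p.1 (mem_Ico.2 ⟨le_rfl, hp.lt⟩))
  have h₂ := hP _ (hp.holds (p.2 - 1) (mem_Ico.2 ⟨by have := hp.lt; omega, by omega⟩))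
  omega

end IsMaxRun

theorem exists_isMaxRun {P : ℤ → Prop} {a b : ℤ} (hP : ∀ x, P x → a ≤ x ∧ x < b) {x : ℤ}
    (hx : P x) : ∃ p, IsMaxRun P p ∧ x ∈ Ico p.1 p.2 := by
  obtain ⟨l, ⟨hlx, hl⟩, hlmin⟩ :=
    Int.exists_least_of_bdd (P := fun l => l ≤ x ∧ ∀ y ∈ Icc l x, P y)
      ⟨a, fun l hl => (hP l (hl.2 l (mem_Icc.2 ⟨le_rfl, hl.1⟩))).1⟩ ⟨x, le_rfl, by simp_all⟩
  obtain ⟨u, ⟨hxu, hu⟩, humax⟩ :=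
    Int.exists_greatest_of_bdd (P := fun u => x ≤ u ∧ ∀ y ∈ Icc x u, P y)
      ⟨b, fun u hu => (hP u (hu.2 u (mem_Icc.2 ⟨hu.1, le_rfl⟩))).2.le⟩ ⟨x, le_rfl, by simp_all⟩
  refine ⟨(l, u + 1), ⟨by simp only; omega, fun y hy => ?_, fun h => ?_, fun h => ?_⟩,
    mem_Ico.2 ⟨hlx, by simp only; omega⟩⟩
  · rw [mem_Ico] at hy
    rcases le_total y x with hyx | hxy
    · exact hl y (mem_Icc.2 ⟨hy.1, hyx⟩)
    · exact hu y (mem_Icc.2 ⟨hxy, by omega⟩)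
  · have := hlmin (l - 1) ⟨by omega, fun y hy => ?_⟩
    · omega
    · rcases (mem_Icc.1 hy).1.lt_or_eq with h' | h'
      · exact hl y (mem_Icc.2 ⟨by omega, (mem_Icc.1 hy).2⟩)
      · exact h'.symm ▸ h
  · have := humax (u + 1) ⟨by omega, fun y hy => ?_⟩
    · omega
    · rcases (mem_Icc.1 hy).2.lt_or_eq with h' | h'
      · exact hu y (mem_Icc.2 ⟨(mem_Icc.1 hy).1, by omega⟩)
      · exact h' ▸ h

theorem mem_iff_isMaxRun {P : ℤ → Prop} {F : Finset (ℤ × ℤ)} (hlt : ∀ p ∈ F, p.1 < p.2)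
    (hF : (F : Set (ℤ × ℤ)).PairwiseDisjoint fun p => Icc p.1 p.2)
    (hP : ∀ x, P x ↔ ∃ p ∈ F, x ∈ Ico p.1 p.2) {p : ℤ × ℤ} :
    p ∈ F ↔ IsMaxRun P p := by
  have run_of_mem : ∀ p ∈ F, IsMaxRun P p := by
    intro p hp
    have := hlt p hp
    refine ⟨this, fun x hx => (hP x).2 ⟨p, hp, hx⟩, fun h => ?_, fun h => ?_⟩
    · obtain ⟨q, hq, hxq⟩ := (hP _).1 h
      rw [mem_Ico] at hxq
      have := hF.elim_finset hp hq p.1 (mem_Icc.2 ⟨le_rfl, this.le⟩) (mem_Icc.2 (by omega))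
      subst this; omega
    · obtain ⟨q, hq, hxq⟩ := (hP _).1 h
      rw [mem_Ico] at hxq
      have := hF.elim_finset hp hq p.2 (mem_Icc.2 ⟨this.le, le_rfl⟩) (mem_Icc.2 (by omega))
      subst this; omega
  refine ⟨run_of_mem p, fun hp => ?_⟩
  obtain ⟨q, hq, hpq⟩ := (hP p.1).1 (hp.holds p.1 (mem_Ico.2 ⟨le_rfl, hp.lt⟩))
  rwa [hp.eq_of_mem_Ico (run_of_mem q hq) (mem_Ico.2 ⟨le_rfl, hp.lt⟩) hpq]

def discrepancy (S S' : Finset ℤ) (x : ℤ) : ℤ := #{i ∈ S | i ≤ x} - #{i ∈ S' | i ≤ x}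

section Discrepancy

variable {S S' : Finset ℤ}

theorem card_filter_le_add_one (S : Finset ℤ) (x : ℤ) :
    #{i ∈ S | i ≤ x + 1} = #{i ∈ S | i ≤ x} + if x + 1 ∈ S then 1 else 0 := by
  have : {i ∈ S | i ≤ x + 1} = {i ∈ S | i ≤ x} ∪ {i ∈ S | i = x + 1} := by
    ext i; simp only [mem_filter, mem_union, ← and_or_left]; exact and_congr_right fun _ => by omega
  rw [this, card_union_of_disjoint (disjoint_filter.2 fun _ _ _ => by omega), filter_eq']
  split_ifs <;> simp

theorem discrepancy_add_one (S S' : Finset ℤ) (x : ℤ) :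
    discrepancy S S' (x + 1) =
      discrepancy S S' x + (if x + 1 ∈ S then 1 else 0) - (if x + 1 ∈ S' then 1 else 0) := by
  simp only [discrepancy, card_filter_le_add_one]
  split_ifs <;> push_cast <;> ring

theorem discrepancy_swap (S S' : Finset ℤ) (x : ℤ) : discrepancy S' S x = -discrepancy S S' x :=
  (neg_sub _ _).symm

theorem abs_discrepancy_add_one_sub_le (S S' : Finset ℤ) (x : ℤ) :
    |discrepancy S S' (x + 1) - discrepancy S S' x| ≤ 1 := by
  rw [discrepancy_add_one, abs_le]
  split_ifs <;> omega

theorem discrepancy_eq_zero_of_lt {x : ℤ} (hS : ∀ i ∈ S, x < i) (hS' : ∀ i ∈ S', x < i) :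
    discrepancy S S' x = 0 := by
  rw [discrepancy, filter_false_of_mem fun i hi => (hS i hi).not_ge,
    filter_false_of_mem fun i hi => (hS' i hi).not_ge, sub_self]

theorem discrepancy_eq_zero_of_le {x : ℤ} (hS : ∀ i ∈ S, i ≤ x) (hS' : ∀ i ∈ S', i ≤ x)
    (hcard : #S = #S') : discrepancy S S' x = 0 := by
  rw [discrepancy, filter_true_of_mem hS, filter_true_of_mem hS', hcard, sub_self]

theorem bounds_of_discrepancy_eq_one {k : ℤ} (hS : S ⊆ Icc 0 k) (hS' : S' ⊆ Icc 0 k)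
    (hcard : #S = #S') {x : ℤ} (hx : discrepancy S S' x = 1) : 0 ≤ x ∧ x < k := by
  have bounds : ∀ T ⊆ Icc 0 k, ∀ i ∈ T, 0 ≤ i ∧ i ≤ k := fun T hT i hi => mem_Icc.1 (hT hi)
  constructor <;> by_contra! h
  · rw [discrepancy_eq_zero_of_lt (fun i hi => by linarith [bounds S hS i hi])
      (fun i hi => by linarith [bounds S' hS' i hi])] at hx
    omega
  · rw [discrepancy_eq_zero_of_le (fun i hi => by linarith [bounds S hS i hi])
      (fun i hi => by linarith [bounds S' hS' i hi]) hcard] at hx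
    omega

end Discrepancy

namespace IsClose

variable {S S' : Finset ℤ}

theorem symm (h : IsClose S S') : IsClose S' S := by
  obtain ⟨g, hbij, hg⟩ := h
  refine ⟨Function.invFunOn g S, hbij.symm hbij.invOn_invFunOn.symm, fun j hj => ?_⟩
  have := hbij.invOn_invFunOn.2 hj
  rcases hg _ (hbij.surjOn.mapsTo_invFunOn hj) with h | h | h <;> omega

theorem card_filter_le (h : IsClose S S') (x : ℤ) :
    #{i ∈ S | i ≤ x} ≤ #{i ∈ S' | i ≤ x + 1} := by
  obtain ⟨g, hbij, hg⟩ := h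
  refine card_le_card_of_injOn g (fun i hi => ?_) (hbij.injOn.mono fun i hi => (mem_filter.1 hi).1)
  obtain ⟨hiS, hix⟩ := mem_filter.1 hi
  refine mem_filter.2 ⟨hbij.mapsTo hiS, ?_⟩
  rcases hg i hiS with h | h | h <;> omega

theorem discrepancy_le_one (h : IsClose S S') (x : ℤ) : discrepancy S S' x ≤ 1 := by
  have h₁ := h.card_filter_le x
  have h₂ := card_filter_le_add_one S' x
  rw [discrepancy]
  split_ifs at h₂ <;> omega

theorem neg_one_le_discrepancy (h : IsClose S S') (x : ℤ) : -1 ≤ discrepancy S S' x := by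
  have := h.symm.discrepancy_le_one x
  rw [discrepancy_swap] at this
  omega

theorem mem_of_discrepancy_eq_one (h : IsClose S S') {x : ℤ} (hx : discrepancy S S' x = 1) :
    x ∈ S := by
  by_contra hxS
  have h₁ := h.card_filter_le (x - 1)
  have h₂ := card_filter_le_add_one S (x - 1)
  rw [sub_add_cancel] at h₁ h₂
  rw [if_neg hxS] at h₂
  rw [discrepancy] at hx
  omega

end IsClose

theorem IsClose.inter_Icc_of_isMaxRun {S S' : Finset ℤ} (h : IsClose S S') {p : ℤ × ℤ}
    (hp : IsMaxRun (discrepancy S S' · = 1) p) :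
    S ∩ Icc p.1 p.2 = Icc p.1 (p.2 - 1) ∧ S' ∩ Icc p.1 p.2 = Icc (p.1 + 1) p.2 := by
  have key : ∀ x, p.1 ≤ x → x ≤ p.2 → (x ∈ S ↔ x < p.2) ∧ (x ∈ S' ↔ p.1 < x) := by
    intro x hx₁ hx₂
    have hstep := discrepancy_add_one S S' (x - 1)
    rw [sub_add_cancel] at hstep
    have hleft : discrepancy S S' (x - 1) = 1 ↔ p.1 < x := by
      refine ⟨fun h' => ?_, fun h' => hp.holds _ (mem_Ico.2 (by omega))⟩
      by_contra! hx
      exact hp.not_left (le_antisymm hx hx₁ ▸ h')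
    have hright : discrepancy S S' x = 1 ↔ x < p.2 := by
      refine ⟨fun h' => ?_, fun h' => hp.holds _ (mem_Ico.2 (by omega))⟩
      by_contra! hx
      exact hp.not_right (le_antisymm hx₂ hx ▸ h')
    -- the increment `d x - d (x - 1) = [x ∈ S] - [x ∈ S']` is `≥ 1` at `p.1`, `0` inside and
    -- `≤ -1` at `p.2`; together with `d x = 1 → x ∈ S` this fixes both memberships
    have hmem : discrepancy S S' x = 1 → x ∈ S := h.mem_of_discrepancy_eq_one
    have := h.discrepancy_le_one x
    have := h.discrepancy_le_one (x - 1)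
    have := hp.lt
    by_cases hS : x ∈ S <;> by_cases hS' : x ∈ S' <;>
      simp only [hS, hS', if_true, if_false, true_iff, false_iff, imp_false] at hstep hmem ⊢ <;>
      omega
  have := hp.lt
  constructor <;> ext x <;> simp only [mem_inter, mem_Icc]
  · refine ⟨fun ⟨hxS, hx₁, hx₂⟩ => ⟨hx₁, ?_⟩, fun ⟨hx₁, hx₂⟩ => ⟨?_, hx₁, by omega⟩⟩
    · have := (key x hx₁ hx₂).1.1 hxS; omega
    · exact (key x hx₁ (by omega)).1.2 (by omega)
  · refine ⟨fun ⟨hxS, hx₁, hx₂⟩ => ⟨?_, hx₂⟩, fun ⟨hx₁, hx₂⟩ => ⟨?_, by omega, hx₂⟩⟩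
    · have := (key x hx₁ hx₂).2.1 hxS; omega
    · exact (key x (by omega) hx₂).2.2 (by omega)

open Classical in
noncomputable def leadRuns (k : ℤ) (S S' : Finset ℤ) : Finset (ℤ × ℤ) :=
  {p ∈ Icc 0 k ×ˢ Icc 0 k | IsMaxRun (discrepancy S S' · = 1) p}

structure IsIntervalDecomposition (k : ℤ) (S S' : Finset ℤ) (C D : Finset (ℤ × ℤ)) : Prop where
  bounds : ∀ p ∈ C ∪ D, 0 ≤ p.1 ∧ p.1 < p.2 ∧ p.2 ≤ k
  pairwiseDisjoint : (↑(C ∪ D) : Set (ℤ × ℤ)).PairwiseDisjoint fun p => Icc p.1 p.2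
  mem_iff_mem : ∀ x ∈ Icc 0 k, (∀ p ∈ C ∪ D, x ∉ Icc p.1 p.2) → (x ∈ S ↔ x ∈ S')
  inter_left : ∀ p ∈ C, S ∩ Icc p.1 p.2 = Icc p.1 (p.2 - 1) ∧ S' ∩ Icc p.1 p.2 = Icc (p.1 + 1) p.2
  inter_right : ∀ p ∈ D, S' ∩ Icc p.1 p.2 = Icc p.1 (p.2 - 1) ∧ S ∩ Icc p.1 p.2 = Icc (p.1 + 1) p.2

theorem isIntervalDecomposition_iff {k : ℤ} {S S' : Finset ℤ} {C D : Finset (ℤ × ℤ)} :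
    IsIntervalDecomposition k S S' C D ↔
      (∀ p ∈ C ∪ D, 0 ≤ p.1 ∧ p.1 < p.2 ∧ p.2 ≤ k) ∧
      (∀ p ∈ C ∪ D, ∀ q ∈ C ∪ D, p ≠ q → Disjoint (Icc p.1 p.2) (Icc q.1 q.2)) ∧
      ((Icc 0 k \ (C ∪ D).biUnion (fun p => Icc p.1 p.2)) ∩ S
        = (Icc 0 k \ (C ∪ D).biUnion (fun p => Icc p.1 p.2)) ∩ S') ∧
      (∀ p ∈ C, S ∩ Icc p.1 p.2 = Icc p.1 (p.2 - 1) ∧ S' ∩ Icc p.1 p.2 = Icc (p.1 + 1) p.2) ∧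
      (∀ p ∈ D, S' ∩ Icc p.1 p.2 = Icc p.1 (p.2 - 1) ∧ S ∩ Icc p.1 p.2 = Icc (p.1 + 1) p.2) := by
  have agree_iff : (∀ x ∈ Icc 0 k, (∀ p ∈ C ∪ D, x ∉ Icc p.1 p.2) → (x ∈ S ↔ x ∈ S')) ↔
      (Icc 0 k \ (C ∪ D).biUnion (fun p => Icc p.1 p.2)) ∩ S
        = (Icc 0 k \ (C ∪ D).biUnion (fun p => Icc p.1 p.2)) ∩ S' := by
    simp only [Finset.ext_iff, mem_inter, mem_sdiff, mem_biUnion, not_exists, not_and]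
    exact ⟨fun h x => ⟨fun ⟨⟨hx, hx'⟩, hxS⟩ => ⟨⟨hx, hx'⟩, (h x hx hx').1 hxS⟩,
      fun ⟨⟨hx, hx'⟩, hxS⟩ => ⟨⟨hx, hx'⟩, (h x hx hx').2 hxS⟩⟩,
      fun h x hx hx' => ⟨fun hxS => ((h x).1 ⟨⟨hx, hx'⟩, hxS⟩).2,
        fun hxS => ((h x).2 ⟨⟨hx, hx'⟩, hxS⟩).2⟩⟩
  exact ⟨fun ⟨h₁, h₂, h₃, h₄, h₅⟩ => ⟨h₁, h₂, agree_iff.1 h₃, h₄, h₅⟩,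
    fun ⟨h₁, h₂, h₃, h₄, h₅⟩ => ⟨h₁, h₂, agree_iff.2 h₃, h₄, h₅⟩⟩

section Existence

variable {k : ℤ} {S S' : Finset ℤ}

theorem mem_leadRuns {p : ℤ × ℤ} :
    p ∈ leadRuns k S S' ↔
      (p.1 ∈ Icc 0 k ∧ p.2 ∈ Icc 0 k) ∧ IsMaxRun (discrepancy S S' · = 1) p := by
  simp only [leadRuns, mem_filter, mem_product]

theorem isMaxRun_of_mem_leadRuns {p : ℤ × ℤ} (hp : p ∈ leadRuns k S S') :
    IsMaxRun (discrepancy S S' · = 1) p :=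
  (mem_leadRuns.1 hp).2

theorem bounds_of_mem_leadRuns {p : ℤ × ℤ} (hp : p ∈ leadRuns k S S') :
    0 ≤ p.1 ∧ p.1 < p.2 ∧ p.2 ≤ k := by
  obtain ⟨⟨hp₁, hp₂⟩, hp⟩ := mem_leadRuns.1 hp
  have := hp.lt
  rw [mem_Icc] at hp₁ hp₂
  omega

theorem exists_mem_leadRuns (hS : S ⊆ Icc 0 k) (hS' : S' ⊆ Icc 0 k) (hcard : #S = #S') {x : ℤ}
    (hx : discrepancy S S' x = 1) : ∃ p ∈ leadRuns k S S', x ∈ Ico p.1 p.2 := by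
  have hbounds := fun y => bounds_of_discrepancy_eq_one (x := y) hS hS' hcard
  obtain ⟨p, hp, hxp⟩ := exists_isMaxRun hbounds hx
  have := hp.bounds hbounds
  have := hp.lt
  refine ⟨p, mem_leadRuns.2 ⟨⟨mem_Icc.2 ?_, mem_Icc.2 ?_⟩, hp⟩, hxp⟩ <;> omega

theorem exists_mem_leadRuns_mem_Icc (hS : S ⊆ Icc 0 k) (hS' : S' ⊆ Icc 0 k) (hcard : #S = #S')
    (hclose : IsClose S S') {x : ℤ} (hxS : x ∈ S) (hxS' : x ∉ S') :
    ∃ p ∈ leadRuns k S S' ∪ leadRuns k S' S, x ∈ Icc p.1 p.2 := by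
  have hstep := discrepancy_add_one S S' (x - 1)
  rw [sub_add_cancel, if_pos hxS, if_neg hxS'] at hstep
  by_cases hx : discrepancy S S' x = 1
  · obtain ⟨p, hp, hxp⟩ := exists_mem_leadRuns hS hS' hcard hx
    exact ⟨p, mem_union_left _ hp, Ico_subset_Icc_self hxp⟩
  · have : discrepancy S' S (x - 1) = 1 := by
      have := hclose.discrepancy_le_one x
      have := hclose.neg_one_le_discrepancy (x - 1)
      rw [discrepancy_swap]
      omega
    obtain ⟨p, hp, hxp⟩ := exists_mem_leadRuns hS' hS hcard.symm this
    rw [mem_Ico] at hxp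
    exact ⟨p, mem_union_right _ hp, mem_Icc.2 (by omega)⟩

theorem discrepancy_separated (S S' : Finset ℤ) {x y : ℤ} (hx : discrepancy S S' x = 1)
    (hy : discrepancy S' S y = 1) : x + 1 < y ∨ y + 1 < x := by
  rw [discrepancy_swap] at hy
  have h₁ := abs_le.1 (abs_discrepancy_add_one_sub_le S S' x)
  have h₂ := abs_le.1 (abs_discrepancy_add_one_sub_le S S' y)
  by_contra! h
  obtain rfl | rfl | rfl : y = x ∨ y = x + 1 ∨ x = y + 1 := by omega
  all_goals omega

theorem isIntervalDecomposition_leadRuns (hS : S ⊆ Icc 0 k) (hS' : S' ⊆ Icc 0 k)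
    (hcard : #S = #S') (hclose : IsClose S S') :
    IsIntervalDecomposition k S S' (leadRuns k S S') (leadRuns k S' S) where
  bounds p hp := (mem_union.1 hp).elim bounds_of_mem_leadRuns bounds_of_mem_leadRuns
  pairwiseDisjoint := by
    rw [coe_union, Set.pairwiseDisjoint_union]
    refine ⟨fun p hp q hq hne => ?_, fun p hp q hq hne => ?_, fun p hp q hq _ => ?_⟩
    · exact (isMaxRun_of_mem_leadRuns hp).disjoint_Icc_of_ne (isMaxRun_of_mem_leadRuns hq) hne
    · exact (isMaxRun_of_mem_leadRuns hp).disjoint_Icc_of_ne (isMaxRun_of_mem_leadRuns hq) hne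
    · exact (isMaxRun_of_mem_leadRuns hp).disjoint_Icc (isMaxRun_of_mem_leadRuns hq)
        fun x y => discrepancy_separated S S'
  mem_iff_mem x _ hx := by
    refine ⟨fun hxS => ?_, fun hxS' => ?_⟩ <;> by_contra hx'
    · obtain ⟨p, hp, hxp⟩ := exists_mem_leadRuns_mem_Icc hS hS' hcard hclose hxS hx'
      exact hx p hp hxp
    · obtain ⟨p, hp, hxp⟩ := exists_mem_leadRuns_mem_Icc hS' hS hcard.symm hclose.symm hxS' hx'
      exact hx p (by rwa [union_comm]) hxp
  inter_left p hp := hclose.inter_Icc_of_isMaxRun (isMaxRun_of_mem_leadRuns hp)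
  inter_right p hp := hclose.symm.inter_Icc_of_isMaxRun (isMaxRun_of_mem_leadRuns hp)

end Existence

noncomputable def icoIndicator (F : Finset (ℤ × ℤ)) (x : ℤ) : ℤ :=
  if ∃ p ∈ F, x ∈ Ico p.1 p.2 then 1 else 0

namespace IsIntervalDecomposition

variable {k : ℤ} {S S' : Finset ℤ} {C D : Finset (ℤ × ℤ)}

theorem swap (h : IsIntervalDecomposition k S S' C D) : IsIntervalDecomposition k S' S D C where
  bounds := by rw [union_comm]; exact h.bounds
  pairwiseDisjoint := by rw [union_comm]; exact h.pairwiseDisjoint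
  mem_iff_mem x hx hx' := (h.mem_iff_mem x hx (by rwa [union_comm])).symm
  inter_left := h.inter_right
  inter_right := h.inter_left

theorem eq_of_mem_Icc (h : IsIntervalDecomposition k S S' C D) {p q : ℤ × ℤ} (hp : p ∈ C ∪ D)
    (hq : q ∈ C ∪ D) {x : ℤ} (hxp : x ∈ Icc p.1 p.2) (hxq : x ∈ Icc q.1 q.2) : p = q :=
  h.pairwiseDisjoint.elim_finset hp hq x hxp hxq

theorem disjoint (h : IsIntervalDecomposition k S S' C D) : Disjoint C D := by
  refine disjoint_left.2 fun p hpC hpD => ?_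
  have := (h.bounds p (mem_union_left _ hpC)).2.1
  have hp : p.1 ∈ S ∩ Icc p.1 p.2 := by
    rw [(h.inter_left p hpC).1]
    exact mem_Icc.2 ⟨le_rfl, by omega⟩
  rw [(h.inter_right p hpD).2, mem_Icc] at hp
  omega

theorem icoIndicator_add_one_of_mem_left (h : IsIntervalDecomposition k S S' C D) {p : ℤ × ℤ}
    (hp : p ∈ C) {x : ℤ} (hx : x + 1 ∈ Icc p.1 p.2) :
    icoIndicator C (x + 1) - icoIndicator D (x + 1) = icoIndicator C x - icoIndicator D x +
      (if x + 1 ∈ S then 1 else 0) - (if x + 1 ∈ S' then 1 else 0) := by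
  have eq_p : ∀ q ∈ C ∪ D, ∀ y, y = x ∨ y = x + 1 → y ∈ Ico q.1 q.2 → q = p :=
    fun q hq y hy hyq =>
      h.eq_of_mem_Icc hq (mem_union_left D hp) (mem_Icc.2 (by rw [mem_Ico] at hyq; omega)) hx
  have hC : ∀ y, y = x ∨ y = x + 1 → ((∃ q ∈ C, y ∈ Ico q.1 q.2) ↔ y ∈ Ico p.1 p.2) :=
    fun y hy => ⟨fun ⟨q, hq, hyq⟩ => eq_p q (mem_union_left _ hq) y hy hyq ▸ hyq,
      fun hyp => ⟨p, hp, hyp⟩⟩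
  have hD : ∀ y, y = x ∨ y = x + 1 → ¬∃ q ∈ D, y ∈ Ico q.1 q.2 := fun y hy ⟨q, hq, hyq⟩ =>
    disjoint_left.1 h.disjoint hp (eq_p q (mem_union_right _ hq) y hy hyq ▸ hq)
  have hS : x + 1 ∈ S ↔ x + 1 ∈ Icc p.1 (p.2 - 1) := by
    rw [← (h.inter_left p hp).1, mem_inter, and_iff_left hx]
  have hS' : x + 1 ∈ S' ↔ x + 1 ∈ Icc (p.1 + 1) p.2 := by
    rw [← (h.inter_left p hp).2, mem_inter, and_iff_left hx]
  rw [mem_Icc] at hx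
  simp only [icoIndicator, hC x (Or.inl rfl), hC (x + 1) (Or.inr rfl), hD x (Or.inl rfl),
    hD (x + 1) (Or.inr rfl), hS, hS']
  simp only [mem_Ico, mem_Icc]
  split_ifs <;> omega

theorem icoIndicator_add_one_of_forall_notMem (h : IsIntervalDecomposition k S S' C D)
    (hS : S ⊆ Icc 0 k) (hS' : S' ⊆ Icc 0 k) {x : ℤ} (hx : ∀ p ∈ C ∪ D, x + 1 ∉ Icc p.1 p.2) :
    icoIndicator C (x + 1) - icoIndicator D (x + 1) = icoIndicator C x - icoIndicator D x +
      (if x + 1 ∈ S then 1 else 0) - (if x + 1 ∈ S' then 1 else 0) := by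
  have hF : ∀ F ⊆ C ∪ D, ∀ y, y = x ∨ y = x + 1 → ¬∃ q ∈ F, y ∈ Ico q.1 q.2 :=
    fun F hF y hy ⟨q, hq, hyq⟩ => hx q (hF hq) (mem_Icc.2 (by rw [mem_Ico] at hyq; omega))
  have hSS' : x + 1 ∈ S ↔ x + 1 ∈ S' := by
    by_cases hx₀ : x + 1 ∈ Icc 0 k
    · exact h.mem_iff_mem _ hx₀ hx
    · exact iff_of_false (fun h' => hx₀ (hS h')) (fun h' => hx₀ (hS' h'))
  simp only [icoIndicator, hF C subset_union_left x (Or.inl rfl),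
    hF C subset_union_left (x + 1) (Or.inr rfl), hF D subset_union_right x (Or.inl rfl),
    hF D subset_union_right (x + 1) (Or.inr rfl), hSS']
  split_ifs <;> omega

theorem icoIndicator_add_one (h : IsIntervalDecomposition k S S' C D) (hS : S ⊆ Icc 0 k)
    (hS' : S' ⊆ Icc 0 k) (x : ℤ) :
    icoIndicator C (x + 1) - icoIndicator D (x + 1) = icoIndicator C x - icoIndicator D x +
      (if x + 1 ∈ S then 1 else 0) - (if x + 1 ∈ S' then 1 else 0) := by
  by_cases hx : ∃ p ∈ C ∪ D, x + 1 ∈ Icc p.1 p.2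
  · obtain ⟨p, hp, hxp⟩ := hx
    rcases mem_union.1 hp with hp | hp
    · exact h.icoIndicator_add_one_of_mem_left hp hxp
    · have := h.swap.icoIndicator_add_one_of_mem_left hp hxp
      linarith
  · push Not at hx
    exact h.icoIndicator_add_one_of_forall_notMem hS hS' hx

theorem discrepancy_eq (h : IsIntervalDecomposition k S S' C D) (hS : S ⊆ Icc 0 k)
    (hS' : S' ⊆ Icc 0 k) (x : ℤ) :
    discrepancy S S' x = icoIndicator C x - icoIndicator D x := by
  have below : ∀ y < 0, discrepancy S S' y = icoIndicator C y - icoIndicator D y := by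
    intro y hy
    have hF : ∀ F ⊆ C ∪ D, ¬∃ q ∈ F, y ∈ Ico q.1 q.2 := fun F hF ⟨q, hq, hyq⟩ => by
      have := (h.bounds q (hF hq)).1
      rw [mem_Ico] at hyq
      omega
    rw [discrepancy_eq_zero_of_lt (fun i hi => by linarith [(mem_Icc.1 (hS hi)).1])
      (fun i hi => by linarith [(mem_Icc.1 (hS' hi)).1]), icoIndicator, icoIndicator,
      if_neg (hF C subset_union_left), if_neg (hF D subset_union_right), sub_self]
  rcases lt_or_ge x 0 with hx | hx
  · exact below x hx
  · have hx' : -1 ≤ x := by omega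
    clear hx
    induction x, hx' using Int.leInduction with
    | base => exact below (-1) (by norm_num)
    | succ y _ ih => rw [discrepancy_add_one, ih, h.icoIndicator_add_one hS hS']

theorem discrepancy_eq_one_iff (h : IsIntervalDecomposition k S S' C D) (hS : S ⊆ Icc 0 k)
    (hS' : S' ⊆ Icc 0 k) (x : ℤ) :
    discrepancy S S' x = 1 ↔ ∃ p ∈ C, x ∈ Ico p.1 p.2 := by
  have hCD : ¬((∃ p ∈ C, x ∈ Ico p.1 p.2) ∧ ∃ q ∈ D, x ∈ Ico q.1 q.2) :=
    fun ⟨⟨p, hp, hxp⟩, q, hq, hxq⟩ => disjoint_left.1 h.disjoint hp <|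
      h.eq_of_mem_Icc (mem_union_left _ hp) (mem_union_right _ hq) (Ico_subset_Icc_self hxp)
        (Ico_subset_Icc_self hxq) ▸ hq
  rw [h.discrepancy_eq hS hS', icoIndicator, icoIndicator]
  by_cases hC : ∃ p ∈ C, x ∈ Ico p.1 p.2
  · rw [if_pos hC, if_neg fun hD => hCD ⟨hC, hD⟩]
    exact iff_of_true rfl hC
  · rw [if_neg hC]
    exact iff_of_false (by split_ifs <;> norm_num) hC

theorem eq_leadRuns (h : IsIntervalDecomposition k S S' C D) (hS : S ⊆ Icc 0 k)
    (hS' : S' ⊆ Icc 0 k) : C = leadRuns k S S' := by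
  ext p
  rw [mem_leadRuns, ← mem_iff_isMaxRun (fun q hq => (h.bounds q (mem_union_left _ hq)).2.1)
    (h.pairwiseDisjoint.subset (coe_subset.2 subset_union_left)) (h.discrepancy_eq_one_iff hS hS')]
  refine ⟨fun hp => ⟨?_, hp⟩, And.right⟩
  have := h.bounds p (mem_union_left _ hp)
  exact ⟨mem_Icc.2 (by omega), mem_Icc.2 (by omega)⟩

end IsIntervalDecomposition

theorem stmt_3 (k : ℤ) (n : ℕ) (S S' : Finset ℤ)
    (hS : S ⊆ Finset.Icc 0 k) (hS' : S' ⊆ Finset.Icc 0 k)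
    (hcardS : S.card = n) (hcardS' : S'.card = n)
    (hclose : IsClose S S') :
    ∃! IJ : Finset (ℤ × ℤ) × Finset (ℤ × ℤ),
      (∀ p ∈ IJ.1 ∪ IJ.2, 0 ≤ p.1 ∧ p.1 < p.2 ∧ p.2 ≤ k) ∧
      (∀ p ∈ IJ.1 ∪ IJ.2, ∀ q ∈ IJ.1 ∪ IJ.2, p ≠ q →
        Disjoint (Finset.Icc p.1 p.2) (Finset.Icc q.1 q.2)) ∧
      ((Finset.Icc 0 k \ (IJ.1 ∪ IJ.2).biUnion (fun p => Finset.Icc p.1 p.2)) ∩ S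
        = (Finset.Icc 0 k \ (IJ.1 ∪ IJ.2).biUnion (fun p => Finset.Icc p.1 p.2)) ∩ S') ∧
      (∀ p ∈ IJ.1,
        S ∩ Finset.Icc p.1 p.2 = Finset.Icc p.1 (p.2 - 1) ∧
        S' ∩ Finset.Icc p.1 p.2 = Finset.Icc (p.1 + 1) p.2) ∧
      (∀ p ∈ IJ.2,
        S' ∩ Finset.Icc p.1 p.2 = Finset.Icc p.1 (p.2 - 1) ∧
        S ∩ Finset.Icc p.1 p.2 = Finset.Icc (p.1 + 1) p.2) := by
  have hcard : #S = #S' := hcardS.trans hcardS'.symm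
  refine (existsUnique_congr fun IJ => isIntervalDecomposition_iff).1
    ⟨(leadRuns k S S', leadRuns k S' S), isIntervalDecomposition_leadRuns hS hS' hcard hclose, ?_⟩
  rintro ⟨C, D⟩ (h : IsIntervalDecomposition k S S' C D)
  rw [h.eq_leadRuns hS hS', h.swap.eq_leadRuns hS' hS]
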